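/- Let Λ ⊂ ℝ^d be a maximal orthogonal set for the unit cube. Then for every point (λ₁, …, λ_d) ∈ Λ, every index j, and every integer n, the number λ_j + n appears as the j-th coordinate of some point of Λ. -/
import Mathlib


/-- An orthogonal set for the unit cube: distinct elements differ by a nonzero
integer in some coordinate. -/
def IsOrtho {d : ℕ} (Λ : Set (Fin d → ℝ)) : Prop :=
  ∀ l ∈ Λ, ∀ m ∈ Λ, l ≠ m → ∃ j : Fin d, ∃ k : ℤ, k ≠ 0 ∧ l j - m j = (k : ℝ)

/-- A maximal orthogonal set for the unit cube. -/
def IsMaxOrtho {d : ℕ} (Λ : Set (Fin d → ℝ)) : Prop :=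
  IsOrtho Λ ∧ ∀ s ∉ Λ, ¬ IsOrtho (insert s Λ)

/-- Every integer translate of every coordinate of a point of a maximal orthogonal
set appears as a coordinate (in the same position) of some point of the set. -/
theorem stmt_15 {d : ℕ} (Λ : Set (Fin d → ℝ)) (hΛ : IsMaxOrtho Λ) :
    ∀ l ∈ Λ, ∀ j : Fin d, ∀ n : ℤ, ∃ μ ∈ Λ, μ j = l j + (n : ℝ) := by
  intro l hl j n
  rcases eq_or_ne n 0 with rfl | hn
  · exact ⟨l, hl, by simp⟩
  set s : Fin d → ℝ := Function.update l j (l j + n) with hs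
  have hsj : s j = l j + n := Function.update_self _ _ _
  have hsi : ∀ i, i ≠ j → s i = l i := fun i hi => Function.update_of_ne hi _ _
  by_cases hmem : s ∈ Λ
  · exact ⟨s, hmem, hsj⟩
  by_contra hcon
  push_neg at hcon
  apply hΛ.2 s hmem
  -- show insert s Λ is ortho
  have key : ∀ m ∈ Λ, ∃ j' : Fin d, ∃ k : ℤ, k ≠ 0 ∧ s j' - m j' = (k : ℝ) := by
    intro m hm
    rcases eq_or_ne m l with rfl | hml
    · exact ⟨j, n, hn, by rw [hsj]; ring⟩
    · obtain ⟨j', k, hk, hkeq⟩ := hΛ.1 l hl m hm (Ne.symm hml)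
      rcases eq_or_ne j' j with rfl | hj'
      · refine ⟨j', k + n, ?_, by rw [hsj]; push_cast; linarith⟩
        intro h0
        have : m j' = l j' + n := by
          have : (k : ℝ) + n = 0 := by exact_mod_cast h0
          linarith
        exact hcon m hm this
      · exact ⟨j', k, hk, by rw [hsi _ hj']; exact hkeq⟩
  intro a ha b hb hab
  rcases ha with rfl | ha
  · rcases hb with rfl | hb
    · exact absurd rfl hab
    · exact key b hb
  · rcases hb with rfl | hb
    · obtain ⟨j', k, hk, hkeq⟩ := key a ha
      exact ⟨j', -k, neg_ne_zero.mpr hk, by push_cast; linarith⟩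
    · exact hΛ.1 a ha b hb hab
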